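/- Let S₂ = {(a,0) : a ≥ 1} ∪ {(0,a) : a ≥ 1} ∪ {(1,1),(2,2)} (all rook steps together with the bishop steps of length at most 2), let p_n be the number of Catalan S₂-paths from (0,0) to (n,n), and let P₂(t) = Σ_{n≥0} p_n tⁿ ∈ ℚ⟦t⟧. Then in ℚ⟦t⟧: ((1 + 3t + t²) − 2t(1−t)(2+t)²·P₂(t))² = 1 − 10t − 5t² + 2t³ + t⁴. -/

import Mathlib

/-- x-coordinate of the `j`-th node of the path `p` (partial sum of first coordinates). -/
def xPart (p : List (ℕ × ℕ)) (j : ℕ) : ℕ := ((p.take j).map Prod.fst).sum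

/-- y-coordinate of the `j`-th node of the path `p` (partial sum of second coordinates). -/
def yPart (p : List (ℕ × ℕ)) (j : ℕ) : ℕ := ((p.take j).map Prod.snd).sum

/-- `p` is an `S`-path from `(0,0)` to `(n,m)`. -/
def IsPath (S : Set (ℕ × ℕ)) (n m : ℕ) (p : List (ℕ × ℕ)) : Prop :=
  (∀ st ∈ p, st ∈ S) ∧ xPart p p.length = n ∧ yPart p p.length = m

/-- `p` is Catalan: every node `(x, y)` satisfies `x ≤ y`. -/
def IsCatalan (p : List (ℕ × ℕ)) : Prop :=
  ∀ j ≤ p.length, xPart p j ≤ yPart p j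

/-- The number of `S`-paths from `(0,0)` to `(n,m)`. -/
noncomputable def aCount (S : Set (ℕ × ℕ)) (n m : ℕ) : ℕ :=
  Set.ncard {p : List (ℕ × ℕ) | IsPath S n m p}

/-- The number of Catalan `S`-paths from `(0,0)` to `(n,n)`. -/
noncomputable def pCatalan (S : Set (ℕ × ℕ)) (n : ℕ) : ℕ :=
  Set.ncard {p : List (ℕ × ℕ) | IsPath S n n p ∧ IsCatalan p}

/-- All rook steps together with the bishop steps of length at most 2. -/
def S2 : Set (ℕ × ℕ) :=
  {st | (∃ a : ℕ, 1 ≤ a ∧ st = (a, 0)) ∨ (∃ a : ℕ, 1 ≤ a ∧ st = (0, a)) ∨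
        st = (1, 1) ∨ st = (2, 2)}

/-!
Kernel method. Let `c(x, h)` count the Catalan `S₂`-paths ending at `(x, x + h)` and
`F(u, v) = ∑ c(x, h) uˣ vʰ`. Splitting a path at its last step (vertical, horizontal, `(1,1)` or
`(2,2)`) gives `F · K(u, v) = (1 - v) (v - u (1 + D(u)))` with `D(u) = F(u, u)` and `K` a
polynomial. Setting `v = 0` gives `(2 - u - u²) F(u, 0) = 1 + D`. Substituting the root
`v = u (1 + D)` of the right-hand side kills it, and `F` stays nonzero (its constant term is 1),
so `K(u, u (1 + D)) = 0`. Eliminating `D` leaves a quadratic equation for `P₂ = F(u, 0)`; the claim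
is that equation with the square completed.
-/

theorem xPart_append_of_le {q : List (ℕ × ℕ)} (r : List (ℕ × ℕ)) {j : ℕ} (hj : j ≤ q.length) :
    xPart (q ++ r) j = xPart q j := by
  rw [xPart, xPart, List.take_append_of_le_length hj]

theorem yPart_append_of_le {q : List (ℕ × ℕ)} (r : List (ℕ × ℕ)) {j : ℕ} (hj : j ≤ q.length) :
    yPart (q ++ r) j = yPart q j := by
  rw [yPart, yPart, List.take_append_of_le_length hj]

theorem xPart_append_singleton_length (q : List (ℕ × ℕ)) (st : ℕ × ℕ) :
    xPart (q ++ [st]) (q ++ [st]).length = xPart q q.length + st.1 := by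
  simp [xPart]

theorem yPart_append_singleton_length (q : List (ℕ × ℕ)) (st : ℕ × ℕ) :
    yPart (q ++ [st]) (q ++ [st]).length = yPart q q.length + st.2 := by
  simp [yPart]

theorem isCatalan_append_singleton_iff {q : List (ℕ × ℕ)} {st : ℕ × ℕ} :
    IsCatalan (q ++ [st]) ↔
      IsCatalan q ∧ xPart q q.length + st.1 ≤ yPart q q.length + st.2 := by
  rw [← xPart_append_singleton_length, ← yPart_append_singleton_length]
  constructor
  · intro hp
    refine ⟨fun j hj => ?_, hp _ le_rfl⟩
    rw [← xPart_append_of_le [st] hj, ← yPart_append_of_le [st] hj]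
    exact hp j (by simp; omega)
  · rintro ⟨hq, hend⟩ j hj
    obtain hj | rfl : j ≤ q.length ∨ j = (q ++ [st]).length := by simp at hj ⊢; omega
    · rw [xPart_append_of_le [st] hj, yPart_append_of_le [st] hj]
      exact hq j hj
    · exact hend

def catalanPaths (S : Set (ℕ × ℕ)) (x y : ℕ) : Set (List (ℕ × ℕ)) :=
  {p | IsPath S x y p ∧ IsCatalan p}

def lastSteps (S : Set (ℕ × ℕ)) (x y : ℕ) : Set (ℕ × ℕ) :=
  {st | st ∈ S ∧ st.1 ≤ x ∧ st.2 ≤ y ∧ x - st.1 ≤ y - st.2}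

section catalanPaths

variable {S : Set (ℕ × ℕ)} {x y : ℕ}

theorem lastSteps_finite (S : Set (ℕ × ℕ)) (x y : ℕ) : (lastSteps S x y).Finite :=
  (Set.finite_Iic (x, y)).subset fun _ hst => Prod.mk_le_mk.2 ⟨hst.2.1, hst.2.2.1⟩

theorem le_of_mem_catalanPaths {p : List (ℕ × ℕ)} (hp : p ∈ catalanPaths S x y) : x ≤ y := by
  obtain ⟨⟨-, hx, hy⟩, hcat⟩ := hp
  exact hx ▸ hy ▸ hcat _ le_rfl

theorem append_singleton_mem_catalanPaths_iff (hxy : x ≤ y) {q : List (ℕ × ℕ)} {st : ℕ × ℕ} :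
    q ++ [st] ∈ catalanPaths S x y ↔
      st ∈ lastSteps S x y ∧ q ∈ catalanPaths S (x - st.1) (y - st.2) := by
  simp only [catalanPaths, lastSteps, IsPath, Set.mem_ofPred_eq, isCatalan_append_singleton_iff,
    xPart_append_singleton_length, yPart_append_singleton_length, List.mem_append,
    List.mem_singleton, or_imp, forall_and, forall_eq]
  constructor
  · rintro ⟨⟨⟨hq, hst⟩, hx, hy⟩, hcat, -⟩
    have hend := hcat _ le_rfl
    exact ⟨⟨hst, by omega, by omega, by omega⟩, ⟨hq, by omega, by omega⟩, hcat⟩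
  · rintro ⟨⟨hst, h1, h2, -⟩, ⟨hq, hx, hy⟩, hcat⟩
    exact ⟨⟨⟨hq, hst⟩, by omega, by omega⟩, hcat, by omega⟩

theorem catalanPaths_eq_empty (hyx : y < x) : catalanPaths S x y = ∅ :=
  Set.eq_empty_of_forall_notMem fun _ hp => (le_of_mem_catalanPaths hp).not_gt hyx

theorem catalanPaths_zero_zero (hS : (0, 0) ∉ S) : catalanPaths S 0 0 = {[]} := by
  ext p
  induction p using List.reverseRecOn with
  | nil => simp [catalanPaths, IsPath, IsCatalan, xPart, yPart]
  | append_singleton q st _ =>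
    simp only [append_singleton_mem_catalanPaths_iff le_rfl, Set.mem_singleton_iff,
      List.append_ne_nil_of_right_ne_nil q (List.cons_ne_nil st []), iff_false]
    rintro ⟨⟨hst, h1, h2, -⟩, -⟩
    exact hS (by rwa [show st = (0, 0) by ext <;> omega] at hst)

theorem catalanPaths_eq_biUnion (hxy : x ≤ y) (h0 : (x, y) ≠ (0, 0)) :
    catalanPaths S x y =
      ⋃ st ∈ lastSteps S x y, (· ++ [st]) '' catalanPaths S (x - st.1) (y - st.2) := by
  ext p
  simp only [Set.mem_iUnion, Set.mem_image, exists_prop]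
  constructor
  · intro hp
    obtain rfl | ⟨q, st, rfl⟩ := List.eq_nil_or_concat' p
    · obtain ⟨⟨-, hx, hy⟩, -⟩ := hp
      simp only [xPart, yPart, List.take_nil, List.map_nil, List.sum_nil] at hx hy
      exact absurd (by rw [← hx, ← hy]) h0
    · exact ⟨st, (append_singleton_mem_catalanPaths_iff hxy).1 hp |>.1, q,
        (append_singleton_mem_catalanPaths_iff hxy).1 hp |>.2, rfl⟩
  · rintro ⟨st, hst, q, hq, rfl⟩
    exact (append_singleton_mem_catalanPaths_iff hxy).2 ⟨hst, hq⟩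

theorem catalanPaths_finite (hS : (0, 0) ∉ S) (x y : ℕ) : (catalanPaths S x y).Finite := by
  induction hn : x + y using Nat.strong_induction_on generalizing x y with
  | _ n ih =>
    rcases lt_or_ge y x with hyx | hxy
    · simp [catalanPaths_eq_empty hyx]
    by_cases h0 : (x, y) = (0, 0)
    · simp only [Prod.mk.injEq] at h0
      simp [h0.1, h0.2, catalanPaths_zero_zero hS]
    rw [catalanPaths_eq_biUnion hxy h0]
    refine (lastSteps_finite S x y).biUnion fun st hst => (ih _ ?_ _ _ rfl).image _
    obtain ⟨hst, h1, h2, -⟩ := hst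
    have : st ≠ (0, 0) := fun h => hS (h ▸ hst)
    rw [Ne, Prod.ext_iff] at this
    omega

theorem ncard_catalanPaths (hS : (0, 0) ∉ S) (hxy : x ≤ y) (h0 : (x, y) ≠ (0, 0)) :
    (catalanPaths S x y).ncard =
      ∑ᶠ st ∈ lastSteps S x y, (catalanPaths S (x - st.1) (y - st.2)).ncard := by
  rw [catalanPaths_eq_biUnion hxy h0, (lastSteps_finite S x y).ncard_biUnion]
  · exact finsum_mem_congr rfl fun st _ =>
      Set.ncard_image_of_injective _ (List.append_left_injective [st])
  · exact fun st _ => (catalanPaths_finite hS _ _).image _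
  · refine fun st _ st' _ hne => Set.disjoint_left.2 ?_
    rintro _ ⟨q, -, rfl⟩ ⟨q', -, h⟩
    exact hne (List.singleton_inj.1 (List.append_inj' h rfl).2).symm

end catalanPaths

namespace PowerSeries
variable {K : Type*} [CommRing K]

/-- No continuity is needed: writing `f = X * g + C (f 0)` pins down the coefficients of `φ f`
one at a time. -/
theorem ringHom_eq_id_of_map_X {φ : K⟦X⟧ →+* K⟦X⟧} (hC : ∀ k, φ (C k) = C k) (hX : φ X = X) :
    φ = RingHom.id _ := by
  suffices ∀ n f, coeff n (φ f) = coeff n f from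
    RingHom.ext fun f => PowerSeries.ext fun n => this n f
  intro n
  induction n with
  | zero =>
    intro f
    conv_lhs => rw [eq_X_mul_shift_add_const f]
    simp [hC, hX]
  | succ n ih =>
    intro f
    conv_lhs => rw [eq_X_mul_shift_add_const f]
    simp [hC, hX, coeff_succ_X_mul, ih]

lemma hasSubst_optionElim {w : K⟦X⟧} (hw : constantCoeff w = 0) :
    MvPowerSeries.HasSubst (fun i : Option Unit => i.elim w fun _ => X) :=
  MvPowerSeries.hasSubst_of_constantCoeff_zero (by rintro (_ | _); exacts [hw, constantCoeff_X])

/-- `G(u, w)` for `G = G(u, v) ∈ K⟦u⟧⟦v⟧`, where `u` is the inner and `v` the outer variable. -/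
noncomputable def substOuter (w : K⟦X⟧) (hw : constantCoeff w = 0) : K⟦X⟧⟦X⟧ →ₐ[K] K⟦X⟧ :=
  (MvPowerSeries.substAlgHom (hasSubst_optionElim hw)).comp
    (MvPowerSeries.optionEquivLeft Unit K).symm.toAlgHom

theorem substOuter_X {w : K⟦X⟧} (hw : constantCoeff w = 0) : substOuter w hw X = w := by
  simp [substOuter, ← MvPowerSeries.optionEquivLeft_X_none,
    MvPowerSeries.subst_X (hasSubst_optionElim hw)]

theorem substOuter_C {w : K⟦X⟧} (hw : constantCoeff w = 0) (r : K⟦X⟧) :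
    substOuter w hw (C r) = r := by
  have : (substOuter w hw).toRingHom.comp (C (R := K⟦X⟧)) = RingHom.id _ := by
    refine ringHom_eq_id_of_map_X (fun k => ?_) ?_
    · have := (substOuter w hw).commutes k
      rwa [algebraMap_apply, algebraMap_apply, Algebra.algebraMap_self, RingHom.id_apply] at this
    · change substOuter w hw (C (MvPowerSeries.X ())) = _
      simp [substOuter, ← MvPowerSeries.optionEquivLeft_X_some,
        MvPowerSeries.subst_X (hasSubst_optionElim hw)]
  exact RingHom.congr_fun this r

theorem constantCoeff_substOuter {w : K⟦X⟧} (hw : constantCoeff w = 0) (F : K⟦X⟧⟦X⟧) :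
    constantCoeff (substOuter w hw F) = constantCoeff (constantCoeff F) := by
  conv_lhs => rw [eq_X_mul_shift_add_const F]
  simp [substOuter_X, substOuter_C, hw]

end PowerSeries

namespace S2

open Finset PowerSeries

theorem zero_notMem : (0, 0) ∉ S2 := by
  rintro (⟨a, ha, h⟩ | ⟨a, ha, h⟩ | h | h) <;> simp [Prod.ext_iff] at h <;> omega

noncomputable def catalanCount (x h : ℕ) : ℕ := (catalanPaths S2 x (x + h)).ncard

theorem ncard_catalanPaths_eq_catalanCount {x y x' h : ℕ} (hx : x = x') (hy : y = x' + h) :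
    (catalanPaths S2 x y).ncard = catalanCount x' h := by
  subst hx hy
  rfl

theorem catalanCount_zero_zero : catalanCount 0 0 = 1 := by
  simp [catalanCount, catalanPaths_zero_zero zero_notMem]

theorem lastSteps_eq (x h : ℕ) :
    lastSteps S2 x (x + h) =
      ↑(((range h).image fun j => (0, h - j)) ∪ ((range x).image fun a => (x - a, 0)) ∪
        ({(1, 1), (2, 2)} : Finset (ℕ × ℕ)).filter fun st => st.1 ≤ x) := by
  ext ⟨a, b⟩
  simp only [lastSteps, S2, Set.mem_ofPred_eq, coe_union, coe_image, coe_range, coe_filter,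
    Set.mem_union, Set.mem_image, Set.mem_Iio, Prod.mk.injEq, mem_insert, mem_singleton]
  constructor
  · rintro ⟨⟨a', ha, ⟨rfl, rfl⟩⟩ | ⟨b', hb, ⟨rfl, rfl⟩⟩ | ⟨rfl, rfl⟩ | ⟨rfl, rfl⟩, h1, h2, h3⟩
    · exact Or.inl (Or.inr ⟨x - a, by omega, by omega, rfl⟩)
    · exact Or.inl (Or.inl ⟨h - b, by omega, rfl, by omega⟩)
    · exact Or.inr ⟨by simp, h1⟩
    · exact Or.inr ⟨by simp, h1⟩
  · rintro ((⟨j, hj, rfl, rfl⟩ | ⟨i, hi, rfl, rfl⟩) | ⟨(⟨rfl, rfl⟩ | ⟨rfl, rfl⟩), h1⟩)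
    · exact ⟨Or.inr (Or.inl ⟨h - j, by omega, rfl, rfl⟩), by omega, by omega, by omega⟩
    · exact ⟨Or.inl ⟨x - i, by omega, rfl, rfl⟩, by omega, by omega, by omega⟩
    · exact ⟨by simp, h1, by omega, by omega⟩
    · exact ⟨by simp, h1, by omega, by omega⟩

theorem catalanCount_eq_sum {x h : ℕ} (h0 : (x, h) ≠ (0, 0)) :
    catalanCount x h = ∑ j ∈ range h, catalanCount x j +
      ∑ a ∈ range x, catalanCount a (h + x - a) +
      ((if 1 ≤ x then catalanCount (x - 1) h else 0) +
        (if 2 ≤ x then catalanCount (x - 2) h else 0)) := by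
  have h0' : (x, x + h) ≠ (0, 0) := by simp only [ne_eq, Prod.mk.injEq] at h0 ⊢; omega
  rw [catalanCount, ncard_catalanPaths zero_notMem (Nat.le_add_right x h) h0', lastSteps_eq,
    finsum_mem_coe_finset, sum_union, sum_union, sum_image, sum_image, sum_filter, sum_pair]
  · congr 1
    · congr 1 <;> refine sum_congr rfl fun j hj => ?_ <;> rw [mem_range] at hj <;>
        exact ncard_catalanPaths_eq_catalanCount (by omega) (by omega)
    · congr 1 <;> split_ifs <;>
        first | rfl | exact ncard_catalanPaths_eq_catalanCount (by omega) (by omega)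
  · decide
  · intro a ha b hb hab
    simp only [coe_range, Set.mem_Iio, Prod.mk.injEq] at ha hb hab
    omega
  · intro a ha b hb hab
    simp only [coe_range, Set.mem_Iio, Prod.mk.injEq] at ha hb hab
    omega
  · simp only [disjoint_left, mem_image, mem_range]
    rintro _ ⟨j, hj, rfl⟩ ⟨a, ha, h⟩
    simp only [Prod.mk.injEq] at h
    omega
  · simp only [disjoint_left, mem_union, mem_image, mem_range, mem_filter, mem_insert,
      mem_singleton]
    rintro _ (⟨j, hj, rfl⟩ | ⟨a, ha, rfl⟩) ⟨h | h, -⟩ <;> simp only [Prod.mk.injEq] at h <;> omega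

noncomputable def heightSeries (h : ℕ) : ℚ⟦X⟧ := mk fun x => (catalanCount x h : ℚ)

/-- `F(u, v)`: the inner variable `u` marks `x`, the outer variable `v` marks the height `h`. -/
noncomputable def catalanGF : ℚ⟦X⟧⟦X⟧ := mk heightSeries

/-- The part of `catalanGF` coming from paths whose last step is vertical. -/
noncomputable def upStepGF : ℚ⟦X⟧⟦X⟧ := mk fun h => ∑ j ∈ range h, heightSeries j

/-- The part of `catalanGF` coming from paths whose last step is horizontal. -/
noncomputable def rightStepGF : ℚ⟦X⟧⟦X⟧ :=
  mk fun h => mk fun x => ∑ a ∈ range x, (catalanCount a (h + x - a) : ℚ)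

/-- `D(u) = F(u, u)`. -/
noncomputable def diagGF : ℚ⟦X⟧ := mk fun n => ∑ a ∈ range (n + 1), (catalanCount a (n - a) : ℚ)

theorem catalanGF_eq :
    catalanGF = 1 + upStepGF + rightStepGF + (C X + C X ^ 2) * catalanGF := by
  ext h x
  have hX (p : ℚ⟦X⟧) : coeff x (X * p) = if 1 ≤ x then coeff (x - 1) p else 0 := by
    simpa using coeff_X_pow_mul' p 1 x
  rw [← map_pow, ← map_add]
  simp only [map_add, coeff_C_mul, add_mul, hX, coeff_X_pow_mul', catalanGF, upStepGF,
    rightStepGF, heightSeries, coeff_mk, map_sum]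
  by_cases h0 : (x, h) = (0, 0)
  · simp only [Prod.mk.injEq] at h0
    simp [h0.1, h0.2, catalanCount_zero_zero]
  · have hone : coeff x (coeff h (1 : ℚ⟦X⟧⟦X⟧)) = 0 := by
      simp only [Prod.mk.injEq, not_and_or] at h0
      rcases h0 with hx | hh <;> simp only [coeff_one] <;> split_ifs <;> simp [*]
    rw [hone, catalanCount_eq_sum h0]
    push_cast
    ring

theorem one_sub_X_mul_upStepGF : (1 - X) * upStepGF = X * catalanGF := by
  ext (_ | h) : 1
  · simp [upStepGF]
  · simp [sub_mul, coeff_succ_X_mul, upStepGF, catalanGF, sum_range_succ]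

theorem X_sub_C_X_mul_rightStepGF :
    (X - C X) * rightStepGF = C X * catalanGF - C X * C diagGF := by
  ext (_ | h) (_ | x)
  · simp [sub_mul, rightStepGF]
  · simp [sub_mul, rightStepGF, catalanGF, heightSeries, diagGF, sum_range_succ]
  · simp [sub_mul, coeff_succ_X_mul, rightStepGF]
  · simp only [rightStepGF, catalanGF, heightSeries, diagGF, sub_mul, map_sub, coeff_succ_X_mul,
      coeff_mk, coeff_C_mul, coeff_mul_C, coeff_succ_C, sum_range_succ, tsub_self, zero_mul,
      sub_zero]
    rw [show h + (x + 1) = h + 1 + x by omega, Nat.add_sub_cancel, add_sub_cancel_left]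

def kernel {R : Type*} [CommRing R] (u v : R) : R :=
  (1 - v) * (v - u) * (1 - u - u ^ 2) - v * (v - u) - u * (1 - v)

theorem map_kernel {R R' F : Type*} [CommRing R] [CommRing R'] [FunLike F R R']
    [RingHomClass F R R'] (f : F) (u v : R) : f (kernel u v) = kernel (f u) (f v) := by
  simp [kernel]

theorem catalanGF_mul_kernel :
    catalanGF * kernel (C X) X = (1 - X) * (X - C X * (1 + C diagGF)) := by
  rw [kernel]
  linear_combination (1 - X) * (X - C X) * catalanGF_eq + (X - C X) * one_sub_X_mul_upStepGF +
    (1 - X) * X_sub_C_X_mul_rightStepGF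

theorem two_sub_X_sub_X_sq_mul_heightSeries_zero :
    (2 - X - X ^ 2) * heightSeries 0 = 1 + diagGF := by
  have h := congrArg constantCoeff catalanGF_mul_kernel
  simp only [map_mul, map_kernel, map_sub, map_one, map_add, constantCoeff_C, constantCoeff_X,
    catalanGF, constantCoeff_mk] at h
  rw [kernel] at h
  refine mul_left_cancel₀ (X_ne_zero : (X : ℚ⟦X⟧) ≠ 0) ?_
  linear_combination (-1 : ℚ⟦X⟧) * h

theorem kernel_eq_zero : kernel X (X * (1 + diagGF)) = 0 := by
  have hw : constantCoeff (X * (1 + diagGF)) = 0 := by simp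
  have h := congrArg (substOuter _ hw) catalanGF_mul_kernel
  simp only [map_mul, map_kernel, map_sub, map_one, map_add, substOuter_C, substOuter_X, sub_self,
    mul_zero] at h
  refine (mul_eq_zero.1 h).resolve_left fun h0 => ?_
  have := congrArg constantCoeff h0
  simp [constantCoeff_substOuter, catalanGF, heightSeries, catalanCount_zero_zero] at this

theorem heightSeries_zero_quadratic :
    X * (2 - X - X ^ 2) ^ 2 * heightSeries 0 ^ 2 -
      (1 - X) * (1 + 3 * X + X ^ 2) * heightSeries 0 + 1 = 0 := by
  have hK := kernel_eq_zero
  rw [show diagGF = (2 - X - X ^ 2) * heightSeries 0 - 1 by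
    linear_combination -two_sub_X_sub_X_sq_mul_heightSeries_zero, kernel] at hK
  have hM : (2 - X - X ^ 2 : ℚ⟦X⟧) ≠ 0 := fun h => by
    simpa [map_ofNat] using congrArg constantCoeff h
  refine (mul_eq_zero.1 ?_).resolve_left (mul_ne_zero X_ne_zero hM)
  linear_combination (-1 : ℚ⟦X⟧) * hK

theorem heightSeries_zero : heightSeries 0 = mk fun n => (pCatalan S2 n : ℚ) := rfl

end S2

theorem stmt10 (P2 : PowerSeries ℚ)
    (hP : P2 = PowerSeries.mk fun n => (pCatalan S2 n : ℚ)) :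
    ((1 + 3 * PowerSeries.X + PowerSeries.X ^ 2) -
        2 * PowerSeries.X * (1 - PowerSeries.X) * (2 + PowerSeries.X) ^ 2 * P2) ^ 2 =
      1 - 10 * PowerSeries.X - 5 * PowerSeries.X ^ 2 + 2 * PowerSeries.X ^ 3 +
        PowerSeries.X ^ 4 := by
  rw [hP, ← S2.heightSeries_zero]
  linear_combination 4 * PowerSeries.X * (2 + PowerSeries.X) ^ 2 * S2.heightSeries_zero_quadratic
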